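/- arXiv:2104.10938 — 3 statements merged into one kernel-verified Lean document; each statement's English description precedes it below -/
import Mathlib

section
/- Let A be an endomorphism of Z^n, let D = colim(Z^n, A) be the direct limit along A, and let α be the automorphism of D determined by α([v, i]) = [v, i+1]. Then there are group isomorphisms coker(1 − α) ≅ coker(1 − A) and ker(1 − α) ≅ ker(1 − A). -/
/-!
Modulo `1 - α` the class of `[v, i]` does not depend on `i`, and modulo `1 - A` the vector `A v`
is congruent to `v`; hence `[v, i] ↦ [v]` and `v ↦ [v, 0]` are mutually inverse maps between the
cokernels. On kernels, `v ↦ [v, 0]` is injective on `A`-fixed vectors because `[v, 0] = 0` forces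
`A ^ k v = 0`; and if `[u, i]` is `α`-fixed then `[A u - u, i + 1] = 0`, so for some `k` the vector
`A ^ k u` is `A`-fixed, and it represents `[u, i]`.
-/

open Module

abbrev DLim {n : ℕ} (A : Module.End ℤ (Fin n → ℤ)) :=
  Module.DirectLimit (fun _ : ℕ => Fin n → ℤ) (fun i j (_ : i ≤ j) => A ^ (j - i))

namespace Module.End

variable {R M : Type*} [Ring R] [AddCommGroup M] [Module R M] (A : Module.End R M)

theorem mem_ker_one_sub_iff {w : M} : w ∈ LinearMap.ker (1 - A) ↔ A w = w := by
  rw [LinearMap.mem_ker, LinearMap.sub_apply, one_apply, sub_eq_zero, eq_comm]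

theorem pow_apply_of_mem_ker_one_sub {w : M} (hw : w ∈ LinearMap.ker (1 - A)) (k : ℕ) :
    (A ^ k) w = w := by
  rw [pow_apply]
  exact Function.IsFixedPt.iterate ((mem_ker_one_sub_iff A).1 hw) k

theorem sub_pow_apply_mem_range_one_sub (k : ℕ) (v : M) :
    v - (A ^ k) v ∈ LinearMap.range (1 - A) := by
  induction k with
  | zero => simp
  | succ k ih =>
    have hstep : v - (A ^ (k + 1)) v = (v - (A ^ k) v) + (1 - A) ((A ^ k) v) := by
      rw [pow_succ', LinearMap.sub_apply, one_apply, mul_apply]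
      abel
    rw [hstep]
    exact add_mem ih (LinearMap.mem_range_self _ _)

abbrev PowLimit : Type _ :=
  Module.DirectLimit (fun _ : ℕ => M) (fun i j (_ : i ≤ j) => A ^ (j - i))

end Module.End

namespace Module.End.PowLimit

open Module.DirectLimit

variable {R M : Type*} [Ring R] [AddCommGroup M] [Module R M] (A : Module.End R M)

local notation "ofA" => of R ℕ (fun _ : ℕ => M) (fun i j (_ : i ≤ j) => A ^ (j - i))

instance directedSystem_pow :
    DirectedSystem (fun _ : ℕ => M) (fun i j (_ : i ≤ j) => ⇑(A ^ (j - i))) where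
  map_self _ _ := by simp
  map_map {k j i} hij hjk x := by
    rw [← Module.End.mul_apply, ← pow_add, Nat.sub_add_sub_cancel hjk hij]

theorem of_succ_apply (i : ℕ) (v : M) : ofA (i + 1) (A v) = ofA i v := by
  simpa using of_f (G := fun _ : ℕ => M) (f := fun i j (_ : i ≤ j) => A ^ (j - i))
    (hij := i.le_succ) (x := v)

theorem exists_pow_apply_eq_zero {i : ℕ} {v : M} (h : ofA i v = 0) : ∃ k, (A ^ k) v = 0 := by
  obtain ⟨j, -, hj⟩ := of.zero_exact h
  exact ⟨j - i, hj⟩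

noncomputable def toCokerOneSub : PowLimit A →ₗ[R] M ⧸ LinearMap.range (1 - A) :=
  lift R ℕ _ _ (fun _ => (LinearMap.range (1 - A)).mkQ) fun i j _ v => by
    rw [Submodule.mkQ_apply, Submodule.mkQ_apply, eq_comm, Submodule.Quotient.eq]
    exact sub_pow_apply_mem_range_one_sub A (j - i) v

theorem toCokerOneSub_of (i : ℕ) (v : M) :
    toCokerOneSub A (ofA i v) = Submodule.Quotient.mk (p := LinearMap.range (1 - A)) v :=
  lift_of ..

variable {A}

def IsShift (σ : Module.End R (PowLimit A)) : Prop :=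
  ∀ i v, σ (ofA i v) = ofA (i + 1) v

variable {σ : Module.End R (PowLimit A)}

theorem one_sub_apply_of (hσ : IsShift σ) (i : ℕ) (v : M) :
    (1 - σ) (ofA i v) = ofA i v - ofA (i + 1) v := by
  rw [LinearMap.sub_apply, one_apply, hσ]

theorem range_one_sub_le_ker_toCokerOneSub (hσ : IsShift σ) :
    LinearMap.range (1 - σ) ≤ LinearMap.ker (toCokerOneSub A) := by
  rintro _ ⟨z, rfl⟩
  obtain ⟨i, v, rfl⟩ := exists_of z
  rw [LinearMap.mem_ker, one_sub_apply_of hσ, map_sub, toCokerOneSub_of, toCokerOneSub_of,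
    sub_self]

theorem range_one_sub_le_comap_of_zero (hσ : IsShift σ) :
    LinearMap.range (1 - A) ≤ (LinearMap.range (1 - σ)).comap (ofA 0) := by
  rintro _ ⟨w, rfl⟩
  refine ⟨-ofA 0 (A w), ?_⟩
  rw [map_neg, one_sub_apply_of hσ, of_succ_apply, LinearMap.sub_apply, one_apply, map_sub,
    neg_sub]

theorem of_sub_of_zero_mem_range_one_sub (hσ : IsShift σ) (i : ℕ) (v : M) :
    ofA i v - ofA 0 v ∈ LinearMap.range (1 - σ) := by
  induction i with
  | zero => simp
  | succ i ih =>
    have hstep : ofA (i + 1) v - ofA 0 v = (ofA i v - ofA 0 v) - (1 - σ) (ofA i v) := by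
      rw [one_sub_apply_of hσ]
      abel
    rw [hstep]
    exact sub_mem ih (LinearMap.mem_range_self _ _)

noncomputable def cokerOneSubEquiv (hσ : IsShift σ) :
    (PowLimit A ⧸ LinearMap.range (1 - σ)) ≃ₗ[R] M ⧸ LinearMap.range (1 - A) :=
  LinearEquiv.ofLinearMap
    ((LinearMap.range (1 - σ)).liftQ (toCokerOneSub A) (range_one_sub_le_ker_toCokerOneSub hσ))
    ((LinearMap.range (1 - A)).mapQ _ (ofA 0) (range_one_sub_le_comap_of_zero hσ))
    (by ext; simp [toCokerOneSub_of])
    (by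
      ext i v
      simp only [LinearMap.coe_comp, Function.comp_apply, Submodule.mkQ_apply,
        Submodule.liftQ_apply, toCokerOneSub_of, Submodule.mapQ_apply, LinearMap.id_coe, id_eq]
      exact ((Submodule.Quotient.eq _).2 (of_sub_of_zero_mem_range_one_sub hσ i v)).symm)

theorem of_zero_mem_ker_one_sub (hσ : IsShift σ) {w : M} (hw : w ∈ LinearMap.ker (1 - A)) :
    ofA 0 w ∈ LinearMap.ker (1 - σ) := by
  rw [LinearMap.mem_ker, one_sub_apply_of hσ, ← of_succ_apply, (mem_ker_one_sub_iff A).1 hw,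
    sub_self]

noncomputable def ofZeroKer (hσ : IsShift σ) :
    LinearMap.ker (1 - A) →ₗ[R] LinearMap.ker (1 - σ) :=
  (ofA 0).restrict fun _ => of_zero_mem_ker_one_sub hσ

theorem ofZeroKer_injective (hσ : IsShift σ) : Function.Injective (ofZeroKer hσ) := by
  rw [← LinearMap.ker_eq_bot, LinearMap.ker_eq_bot']
  rintro ⟨w, hw⟩ h0
  obtain ⟨k, hk⟩ := exists_pow_apply_eq_zero A (congrArg Subtype.val h0)
  change (A ^ k) w = 0 at hk
  rw [pow_apply_of_mem_ker_one_sub A hw] at hk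
  exact Subtype.ext hk

theorem ofZeroKer_surjective (hσ : IsShift σ) : Function.Surjective (ofZeroKer hσ) := by
  rintro ⟨z, hz⟩
  obtain ⟨i, u, rfl⟩ := exists_of z
  rw [LinearMap.mem_ker, one_sub_apply_of hσ, ← of_succ_apply, ← map_sub] at hz
  obtain ⟨k, hk⟩ := exists_pow_apply_eq_zero A hz
  rw [map_sub, sub_eq_zero] at hk
  have hfix : (A ^ k) u ∈ LinearMap.ker (1 - A) := by
    rw [mem_ker_one_sub_iff, ← mul_apply, ← pow_succ', pow_succ, mul_apply, hk]
  refine ⟨⟨_, hfix⟩, Subtype.ext ?_⟩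
  change ofA 0 ((A ^ k) u) = ofA i u
  calc ofA 0 ((A ^ k) u)
      = ofA (i + k) ((A ^ (i + k - 0)) ((A ^ k) u)) := (of_f (hij := (i + k).zero_le)).symm
    _ = ofA (i + k) ((A ^ (i + k - i)) u) := by
      rw [pow_apply_of_mem_ker_one_sub A hfix, Nat.add_sub_cancel_left]
    _ = ofA i u := of_f (hij := i.le_add_right k)

noncomputable def kerOneSubEquiv (hσ : IsShift σ) :
    LinearMap.ker (1 - A) ≃ₗ[R] LinearMap.ker (1 - σ) :=
  LinearEquiv.ofBijective (ofZeroKer hσ) ⟨ofZeroKer_injective hσ, ofZeroKer_surjective hσ⟩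

end Module.End.PowLimit

/-- with `D = colim(ℤⁿ, A)` and `α` the automorphism `[v,i] ↦ [v,i+1]`,
one has `coker(1-α) ≅ coker(1-A)` and `ker(1-α) ≅ ker(1-A)`. -/
theorem stmt_3 {n : ℕ} (A : Module.End ℤ (Fin n → ℤ))
    (α : DLim A ≃ₗ[ℤ] DLim A)
    (hα : ∀ (i : ℕ) (v : Fin n → ℤ),
      α (Module.DirectLimit.of ℤ ℕ (fun _ : ℕ => Fin n → ℤ)
            (fun i j (_ : i ≤ j) => A ^ (j - i)) i v) =
        Module.DirectLimit.of ℤ ℕ (fun _ : ℕ => Fin n → ℤ)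
            (fun i j (_ : i ≤ j) => A ^ (j - i)) (i + 1) v) :
    Nonempty
      ((DLim A ⧸ LinearMap.range
          ((LinearMap.id : DLim A →ₗ[ℤ] DLim A) - (α : DLim A →ₗ[ℤ] DLim A))) ≃ₗ[ℤ]
        ((Fin n → ℤ) ⧸ LinearMap.range (1 - A))) ∧
    Nonempty
      ((LinearMap.ker
          ((LinearMap.id : DLim A →ₗ[ℤ] DLim A) - (α : DLim A →ₗ[ℤ] DLim A))) ≃ₗ[ℤ]
        LinearMap.ker (1 - A)) :=
  ⟨⟨Module.End.PowLimit.cokerOneSubEquiv hα⟩,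
    ⟨(Module.End.PowLimit.kerOneSubEquiv hα).symm⟩⟩
end

section
/- Let D_• be a chain complex of abelian groups and γ_• : D_• → D_• a chain endomorphism (commuting with the differentials). Let C_• = coker(1 − γ)_• and C'_• = ker(1 − γ)_• be the induced quotient and sub chain complexes, and let T_• be the mapping cone of the chain map (1 − γ) : D_• → D_•. Then there is a long exact sequence ··· → H_{p−1}(C'_•) → H_p(T_•) → H_p(C_•) → H_{p−2}(C'_•) → H_{p−1}(T_•) → ···. -/
/-!
Factor `f = 1 - γ` as `D ↠ im f ↪ D`. The short exact sequences `ker f ↪ D ↠ im f` and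
`im f ↪ D ↠ coker f` give distinguished triangles in the derived category, and so does
`D → D → Cone f`. The octahedral axiom applied to the composite `D ↠ im f ↪ D` yields a
distinguished triangle `(ker f)[1] → Cone f → coker f → (ker f)[2]`, whose homology long exact
sequence is the one claimed.
-/

open CategoryTheory CategoryTheory.Limits

/-- Homology in homological (chain) degree `p` of a cochain complex, i.e. its
cohomology in degree `-p`. -/
noncomputable abbrev Hdeg (K : CochainComplex (ModuleCat ℤ) ℤ) (p : ℤ) : ModuleCat ℤ :=
  K.homology (-p)

open Pretriangulated

namespace CategoryTheory.Abelian

variable {A : Type*} [Category A] [Abelian A] {X Y : A} (f : X ⟶ Y)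

lemma shortExact_kernel_factorThruImage :
    (ShortComplex.mk (kernel.ι f) (Abelian.factorThruImage f)
      (by simp [← cancel_mono (Abelian.image.ι f)])).ShortExact where
  exact := ShortComplex.exact_of_f_is_kernel _
    (isKernelOfComp (Abelian.image.ι f) f (kernelIsKernel f) _ (Abelian.image.fac f))

lemma shortExact_image_cokernel :
    (ShortComplex.mk (Abelian.image.ι f) (cokernel.π f) (kernel.condition _)).ShortExact where
  exact := ShortComplex.exact_of_f_is_kernel _ (kernelIsKernel _)

end CategoryTheory.Abelian

lemma CategoryTheory.ShortComplex.Exact.moduleCat_conj {R : Type*} [Ring R]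
    {S : ShortComplex (ModuleCat R)} (hS : S.Exact) {N₁ N₂ N₃ : ModuleCat R}
    (e₁ : S.X₁ ≅ N₁) (e₂ : S.X₂ ≅ N₂) (e₃ : S.X₃ ≅ N₃) :
    Function.Exact (e₁.inv ≫ S.f ≫ e₂.hom) (e₂.inv ≫ S.g ≫ e₃.hom) :=
  Function.Exact.of_ladder_linearEquiv_of_exact (e₁ := e₁.toLinearEquiv)
    (e₂ := e₂.toLinearEquiv) (e₃ := e₃.toLinearEquiv) (by ext; simp) (by ext; simp)
    ((ShortComplex.ShortExact.moduleCat_exact_iff_function_exact S).1 hS)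

namespace DerivedCategory

variable {A : Type*} [Category A] [Abelian A] [HasDerivedCategory A]

theorem exists_distTriang_kernel_mappingCone_cokernel {K L : CochainComplex A ℤ} (f : K ⟶ L) :
    ∃ (u : (Q.obj (kernel f))⟦(1 : ℤ)⟧ ⟶ Q.obj (CochainComplex.mappingCone f))
      (v : Q.obj (CochainComplex.mappingCone f) ⟶ Q.obj (cokernel f))
      (w : Q.obj (cokernel f) ⟶ (Q.obj (kernel f))⟦(1 : ℤ)⟧⟦(1 : ℤ)⟧),
      Triangle.mk u v w ∈ distTriang _ :=
  let O := Triangulated.someOctahedron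
    ((Q.map_comp _ _).symm.trans (congrArg Q.map (Abelian.image.fac f)))
    (rot_of_distTriang _
      (triangleOfSES_distinguished (Abelian.shortExact_kernel_factorThruImage f)))
    (triangleOfSES_distinguished (Abelian.shortExact_image_cokernel f))
    (mappingCone_triangle_distinguished f)
  ⟨O.m₁, O.m₃, _, O.mem⟩

noncomputable def homologyFunctorObjShiftQObjIso (K : CochainComplex A ℤ) (n n' : ℤ)
    (h : n + 1 = n') : (homologyFunctor A n).obj ((Q.obj K)⟦(1 : ℤ)⟧) ≅ K.homology n' :=
  ((homologyFunctor A 0).shiftIso 1 n n' (by lia)).app _ ≪≫ (homologyFunctorFactors A n').app K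

end DerivedCategory

namespace DerivedCategory

variable {R : Type*} [Ring R] [HasDerivedCategory (ModuleCat R)]

theorem exists_homology_exact_of_distTriang {X Y Z : CochainComplex (ModuleCat R) ℤ}
    {u : (Q.obj X)⟦(1 : ℤ)⟧ ⟶ Q.obj Y} {v : Q.obj Y ⟶ Q.obj Z}
    {w : Q.obj Z ⟶ (Q.obj X)⟦(1 : ℤ)⟧⟦(1 : ℤ)⟧}
    (hT : Triangle.mk u v w ∈ distTriang (DerivedCategory (ModuleCat R))) :
    ∃ (α : ∀ n n' : ℤ, n + 1 = n' → X.homology n' →ₗ[R] Y.homology n)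
      (β : ∀ n : ℤ, Y.homology n →ₗ[R] Z.homology n)
      (δ : ∀ n n' n'' : ℤ, n + 1 = n' → n' + 1 = n'' →
        Z.homology n →ₗ[R] X.homology n''),
      ∀ (n n' n'' : ℤ) (h : n + 1 = n') (h' : n' + 1 = n''),
        Function.Exact (α n n' h) (β n) ∧
        Function.Exact (β n) (δ n n' n'' h h') ∧
        Function.Exact (δ n n' n'' h h') (α n' n'' h') := by
  let EX := homologyFunctorObjShiftQObjIso X
  let EY (n : ℤ) := (homologyFunctorFactors (ModuleCat R) n).app Y
  let EZ (n : ℤ) := (homologyFunctorFactors (ModuleCat R) n).app Z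
  refine ⟨fun n n' h => ((EX n n' h).inv ≫ (homologyFunctor _ n).map u ≫ (EY n).hom).hom,
    fun n => ((EY n).inv ≫ (homologyFunctor _ n).map v ≫ (EZ n).hom).hom,
    fun n n' n'' h h' =>
      ((EZ n).inv ≫ HomologySequence.δ (Triangle.mk u v w) n n' h ≫ (EX n' n'' h').hom).hom,
    fun n n' n'' h h' => ⟨?_, ?_, ?_⟩⟩
  · exact (HomologySequence.exact₂ _ hT n).moduleCat_conj _ _ _
  · exact (HomologySequence.exact₃ _ hT n n' h).moduleCat_conj _ _ _
  · exact (HomologySequence.exact₁ _ hT n n' h).moduleCat_conj _ _ _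

end DerivedCategory

/-- for a chain complex `D` of abelian groups with a chain endomorphism `γ`,
with `C = coker (1 - γ)`, `C' = ker (1 - γ)` and `T` the mapping cone of `1 - γ`, there is a
long exact sequence `⋯ → H_{p-1}(C') → H_p(T) → H_p(C) → H_{p-2}(C') → H_{p-1}(T) → ⋯`. -/
theorem stmt_4 (D : CochainComplex (ModuleCat ℤ) ℤ) (γ : D ⟶ D) :
    ∃ (a : ∀ p : ℤ, Hdeg (kernel (𝟙 D - γ)) (p - 1) →ₗ[ℤ]
              Hdeg (CochainComplex.mappingCone (𝟙 D - γ)) p)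
      (b : ∀ p : ℤ, Hdeg (CochainComplex.mappingCone (𝟙 D - γ)) p →ₗ[ℤ]
              Hdeg (cokernel (𝟙 D - γ)) p)
      (c : ∀ p : ℤ, Hdeg (cokernel (𝟙 D - γ)) p →ₗ[ℤ]
              Hdeg (kernel (𝟙 D - γ)) (p - 1 - 1)),
      ∀ p : ℤ,
        Function.Exact (a p) (b p) ∧
        Function.Exact (b p) (c p) ∧
        Function.Exact (c p) (a (p - 1)) := by
  let := HasDerivedCategory.standard (ModuleCat ℤ)
  obtain ⟨u, v, w, hT⟩ :=
    DerivedCategory.exists_distTriang_kernel_mappingCone_cokernel (𝟙 D - γ)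
  obtain ⟨α, β, δ, hexact⟩ := DerivedCategory.exists_homology_exact_of_distTriang hT
  exact ⟨fun p => α (-p) (-(p - 1)) (by lia), fun p => β (-p),
    fun p => δ (-p) (-(p - 1)) (-(p - 1 - 1)) (by lia) (by lia),
    fun p => hexact _ _ _ _ _⟩
end

section
/- Let m ≥ 2, Σ = ∏_{n≥1} {0, …, m−1} with the odometer homeomorphism β, let μ be the uniform Bernoulli product measure on Σ, and let C(Σ, Z) be the group of locally constant Z-valued functions. Then the map h ↦ ∫ h dμ induces a group isomorphism from the coinvariants C(Σ, Z)/⟨h − h∘β : h ∈ C(Σ, Z)⟩ onto Z[1/m]. -/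
/-!
A locally constant `h : C(Σ, ℤ)` depends only on finitely many digits, so it factors as
`h = K ∘ odoVal m · k` for some `K : ℤ/m^kℤ → ℤ`. On this level `β` acts as `j ↦ j + 1` and `μ`
becomes the uniform measure, so `∫ h dμ = (∑ K) / m^k ∈ ℤ[1/m]`, and `∫ h dμ = 0` iff `∑ K = 0`
iff `K = G - G (· + 1)` for some `G`, i.e. iff `h` is a coboundary.
-/

open MeasureTheory

/-- The value in `ℤ/m^kℤ` of the first `k` digits of `x ∈ ∏ {0,…,m-1}`. -/
def odoVal (m : ℕ) (x : ℕ → Fin m) (k : ℕ) : ZMod (m ^ k) :=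
  ∑ n ∈ Finset.range k, ((x n).val : ZMod (m ^ k)) * (m : ZMod (m ^ k)) ^ n

/-- The subgroup of coboundaries `h - h ∘ β` inside the locally constant functions. -/
def odoCobound (m : ℕ) (β : (ℕ → Fin m) → (ℕ → Fin m)) :
    AddSubgroup (LocallyConstant (ℕ → Fin m) ℤ) :=
  AddSubgroup.closure
    {g : LocallyConstant (ℕ → Fin m) ℤ |
      ∃ h : LocallyConstant (ℕ → Fin m) ℤ, ∀ x, g x = h x - h (β x)}

section FirstDigits

variable {X : Type*}

def firstDigits (k : ℕ) (x : ℕ → X) : Fin k → X := fun i => x i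

theorem firstDigits_eq_firstDigits_iff {k : ℕ} {x y : ℕ → X} :
    firstDigits k x = firstDigits k y ↔ ∀ n < k, x n = y n := by
  simp [firstDigits, funext_iff, Fin.forall_iff]

theorem firstDigits_surjective [Nonempty X] (k : ℕ) :
    Function.Surjective (firstDigits (X := X) k) := by
  classical
  obtain ⟨a⟩ := ‹Nonempty X›
  exact fun w => ⟨fun n => if hn : n < k then w ⟨n, hn⟩ else a, funext fun i => dif_pos i.isLt⟩

theorem continuous_firstDigits [TopologicalSpace X] (k : ℕ) :
    Continuous (firstDigits (X := X) k) :=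
  continuous_pi fun _ => continuous_apply _

theorem measurable_firstDigits [MeasurableSpace X] (k : ℕ) :
    Measurable (firstDigits (X := X) k) :=
  measurable_pi_lambda _ fun _ => measurable_pi_apply _

/-- Cover `ℕ → X` by basic open sets on which `h` is constant; a finite subcover involves
only finitely many coordinates. -/
theorem IsLocallyConstant.exists_eq_of_firstDigits_eq [TopologicalSpace X] [CompactSpace X]
    {Y : Type*} {h : (ℕ → X) → Y} (hh : IsLocallyConstant h) :
    ∃ k, ∀ x y, firstDigits k x = firstDigits k y → h x = h y := by
  have hbasic : ∀ z, ∃ (I : Finset ℕ) (u : ℕ → Set X),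
      (∀ n ∈ I, IsOpen (u n) ∧ z n ∈ u n) ∧ (I : Set ℕ).pi u ⊆ h ⁻¹' {h z} :=
    fun z => isOpen_pi_iff.mp (hh _) z rfl
  choose I u hu hsub using hbasic
  obtain ⟨t, ht⟩ := isCompact_univ.elim_finite_subcover (fun z => (I z : Set ℕ).pi (u z))
    (fun z => isOpen_set_pi (I z).finite_toSet fun n hn => (hu z n hn).1)
    (fun z _ => Set.mem_iUnion.mpr ⟨z, fun n hn => (hu z n hn).2⟩)
  refine ⟨t.sup fun z => (I z).sup Nat.succ, fun x y hxy => ?_⟩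
  obtain ⟨z, hzt, hxz⟩ := Set.mem_iUnion₂.mp (ht (Set.mem_univ x))
  have hyz : y ∈ (I z : Set ℕ).pi (u z) := fun n hn => by
    have hnk : n < t.sup fun z => (I z).sup Nat.succ :=
      Nat.lt_of_lt_of_le (Finset.le_sup (f := Nat.succ) hn)
        (Finset.le_sup (f := fun z => (I z).sup Nat.succ) hzt)
    rw [← firstDigits_eq_firstDigits_iff.mp hxy n hnk]
    exact hxz n hn
  exact (hsub z hxz).trans (hsub z hyz).symm

theorem LocallyConstant.exists_eq_comp_firstDigits [TopologicalSpace X] [CompactSpace X]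
    [Nonempty X] {Y : Type*} (h : LocallyConstant (ℕ → X) Y) :
    ∃ (k : ℕ) (F : (Fin k → X) → Y), ∀ x, h x = F (firstDigits k x) := by
  obtain ⟨k, hk⟩ := h.isLocallyConstant.exists_eq_of_firstDigits_eq
  refine ⟨k, h ∘ Function.surjInv (firstDigits_surjective k), fun x => hk _ _ ?_⟩
  exact (Function.surjInv_eq (firstDigits_surjective k) _).symm

end FirstDigits

theorem ZMod.sum_range_natCast {N : ℕ} [NeZero N] {M : Type*} [AddCommMonoid M]
    (K : ZMod N → M) : ∑ i ∈ Finset.range N, K i = ∑ j, K j :=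
  Finset.sum_nbij' (fun i => (i : ZMod N)) ZMod.val (by simp) (by simp [ZMod.val_lt])
    (fun _ hi => ZMod.val_cast_of_lt (Finset.mem_range.mp hi))
    (fun j _ => ZMod.natCast_zmod_val j) (fun _ _ => rfl)

/-- The primitive `G v = -∑_{i < v} K i` is well defined around the cycle because `∑ K = 0`. -/
theorem ZMod.exists_eq_sub_add_one_of_sum_eq_zero {N : ℕ} [NeZero N] {M : Type*}
    [AddCommGroup M] (K : ZMod N → M) (hK : ∑ j, K j = 0) :
    ∃ G : ZMod N → M, ∀ v, K v = G v - G (v + 1) := by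
  refine ⟨fun v => -∑ i ∈ Finset.range v.val, K i, fun v => ?_⟩
  have hv : ((v.val : ℕ) : ZMod N) = v := ZMod.natCast_zmod_val v
  have hsucc : v + 1 = ((v.val + 1 : ℕ) : ZMod N) := by rw [Nat.cast_succ, hv]
  obtain hlt | heq : v.val + 1 < N ∨ v.val + 1 = N := by have := v.val_lt; omega
  · beta_reduce
    rw [hsucc, ZMod.val_cast_of_lt hlt, Finset.sum_range_succ, hv]
    abel
  · have htotal : ∑ i ∈ Finset.range (v.val + 1), K i = 0 := by
      rw [heq, ZMod.sum_range_natCast, hK]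
    rw [Finset.sum_range_succ, hv] at htotal
    beta_reduce
    rw [hsucc, heq, ZMod.natCast_self, ZMod.val_zero, Finset.sum_range_zero, neg_zero,
      sub_zero, ← add_eq_zero_iff_neg_eq.mp htotal]

/-- Reads `w` as the base-`m` expansion `∑ i, w i * m ^ i`. -/
def digitsEquiv (m k : ℕ) [NeZero m] : (Fin k → Fin m) ≃ ZMod (m ^ k) where
  toFun w := (finFunctionFinEquiv w : ℕ)
  invFun j := finFunctionFinEquiv.symm ⟨j.val, j.val_lt⟩
  left_inv w := by
    simp only [ZMod.val_cast_of_lt (finFunctionFinEquiv w).isLt, Fin.eta, Equiv.symm_apply_apply]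
  right_inv j := by simp

section Odometer

open scoped ENNReal

variable {m : ℕ} [NeZero m]

theorem odoVal_eq_digitsEquiv (x : ℕ → Fin m) (k : ℕ) :
    odoVal m x k = digitsEquiv m k (firstDigits k x) := by
  simp [odoVal, digitsEquiv, firstDigits, Finset.sum_range]

theorem LocallyConstant.exists_eq_comp_odoVal {Y : Type*} (h : LocallyConstant (ℕ → Fin m) Y) :
    ∃ (k : ℕ) (K : ZMod (m ^ k) → Y), ∀ x, h x = K (odoVal m x k) := by
  obtain ⟨k, F, hF⟩ := h.exists_eq_comp_firstDigits
  exact ⟨k, F ∘ (digitsEquiv m k).symm, fun x => by simp [hF, odoVal_eq_digitsEquiv]⟩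

@[simps]
def LocallyConstant.ofOdoVal {Y : Type*} (k : ℕ) (K : ZMod (m ^ k) → Y) :
    LocallyConstant (ℕ → Fin m) Y where
  toFun x := K (odoVal m x k)
  isLocallyConstant := by
    simp only [odoVal_eq_digitsEquiv]
    exact (IsLocallyConstant.of_discrete (K ∘ digitsEquiv m k)).comp_continuous
      (continuous_firstDigits k)

variable (μ : Measure (ℕ → Fin m))

section FiniteMeasure

variable [IsFiniteMeasure μ]

theorem integrable_comp_odoVal (k : ℕ) (K : ZMod (m ^ k) → ℝ) :
    Integrable (fun x => K (odoVal m x k)) μ := by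
  simp only [odoVal_eq_digitsEquiv]
  exact (Integrable.of_finite (f := K ∘ digitsEquiv m k)).comp_measurable
    (measurable_firstDigits k)

theorem LocallyConstant.integrable_intCast (h : LocallyConstant (ℕ → Fin m) ℤ) :
    Integrable (fun x => (h x : ℝ)) μ := by
  obtain ⟨k, K, hK⟩ := h.exists_eq_comp_odoVal
  simpa only [hK] using integrable_comp_odoVal μ k fun j => (K j : ℝ)

noncomputable def integralAddHom : LocallyConstant (ℕ → Fin m) ℤ →+ ℝ :=
  AddMonoidHom.mk' (fun h => ∫ x, (h x : ℝ) ∂μ) fun a b => by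
    simp only [LocallyConstant.coe_add, Pi.add_apply, Int.cast_add]
    exact integral_add (a.integrable_intCast μ) (b.integrable_intCast μ)

end FiniteMeasure

variable (hμ : ∀ (k : ℕ) (c : ℕ → Fin m), μ {x | ∀ n < k, x n = c n} = ((m : ℝ≥0∞) ^ k)⁻¹)
include hμ

theorem map_firstDigits_singleton (k : ℕ) (w : Fin k → Fin m) :
    μ.map (firstDigits k) {w} = ((m : ℝ≥0∞) ^ k)⁻¹ := by
  obtain ⟨c, rfl⟩ := firstDigits_surjective k w
  rw [Measure.map_apply (measurable_firstDigits k) (measurableSet_singleton _), ← hμ k c]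
  congr 1
  ext x
  exact firstDigits_eq_firstDigits_iff

variable [IsFiniteMeasure μ]

theorem integral_comp_odoVal (k : ℕ) (K : ZMod (m ^ k) → ℝ) :
    ∫ x, K (odoVal m x k) ∂μ = (∑ j, K j) / m ^ k := by
  have hK : Integrable (K ∘ digitsEquiv m k) (μ.map (firstDigits k)) := .of_finite
  simp only [odoVal_eq_digitsEquiv]
  change ∫ x, (K ∘ digitsEquiv m k) (firstDigits k x) ∂μ = _
  rw [← integral_map (measurable_firstDigits k).aemeasurable hK.aestronglyMeasurable,
    integral_fintype hK]
  simp [measureReal_def, map_firstDigits_singleton μ hμ, ← Finset.mul_sum, Equiv.sum_comp,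
    div_eq_inv_mul]

theorem LocallyConstant.exists_integral_eq_intCast_div_pow (h : LocallyConstant (ℕ → Fin m) ℤ) :
    ∃ (v : ℤ) (i : ℕ), ∫ x, (h x : ℝ) ∂μ = v / m ^ i := by
  obtain ⟨k, K, hK⟩ := h.exists_eq_comp_odoVal
  refine ⟨∑ j, K j, k, ?_⟩
  simpa only [hK, Int.cast_sum] using integral_comp_odoVal μ hμ k fun j => (K j : ℝ)

theorem exists_locallyConstant_integral_eq_intCast_div_pow (v : ℤ) (i : ℕ) :
    ∃ h : LocallyConstant (ℕ → Fin m) ℤ, ∫ x, (h x : ℝ) ∂μ = v / m ^ i := by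
  classical
  refine ⟨.ofOdoVal i (Pi.single 0 v), ?_⟩
  simp only [LocallyConstant.ofOdoVal_apply]
  rw [integral_comp_odoVal μ hμ i fun j => ((Pi.single 0 v : ZMod (m ^ i) → ℤ) j : ℝ),
    ← Int.cast_sum, Finset.sum_pi_single', if_pos (Finset.mem_univ _)]

variable {β : (ℕ → Fin m) → (ℕ → Fin m)} (hβ : ∀ x k, odoVal m (β x) k = odoVal m x k + 1)
include hβ

theorem integral_sub_comp_eq_zero (h : LocallyConstant (ℕ → Fin m) ℤ) :
    ∫ x, ((h x - h (β x) : ℤ) : ℝ) ∂μ = 0 := by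
  obtain ⟨k, K, hK⟩ := h.exists_eq_comp_odoVal
  have hshift : ∑ j, (K (j + 1) : ℝ) = ∑ j, (K j : ℝ) :=
    Equiv.sum_comp (Equiv.addRight (1 : ZMod (m ^ k))) fun j => (K j : ℝ)
  simp only [hK, hβ, Int.cast_sub]
  rw [integral_comp_odoVal μ hμ k fun j => (K j : ℝ) - K (j + 1), Finset.sum_sub_distrib, hshift,
    sub_self, zero_div]

theorem odoCobound_le_ker_integralAddHom : odoCobound m β ≤ (integralAddHom μ).ker := by
  refine (AddSubgroup.closure_le _).mpr ?_
  rintro g ⟨h, hg⟩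
  simpa [integralAddHom, hg] using integral_sub_comp_eq_zero μ hμ hβ h

theorem mem_odoCobound_of_integral_eq_zero (h : LocallyConstant (ℕ → Fin m) ℤ)
    (h0 : ∫ x, (h x : ℝ) ∂μ = 0) : h ∈ odoCobound m β := by
  obtain ⟨k, K, hK⟩ := h.exists_eq_comp_odoVal
  have hsum : ∑ j, K j = 0 := by
    have hint := integral_comp_odoVal μ hμ k fun j => (K j : ℝ)
    simp only [← hK, h0] at hint
    exact_mod_cast ((div_eq_zero_iff.mp hint.symm).resolve_right
      (pow_ne_zero _ (Nat.cast_ne_zero.mpr (NeZero.ne m))))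
  obtain ⟨G, hG⟩ := ZMod.exists_eq_sub_add_one_of_sum_eq_zero K hsum
  exact AddSubgroup.subset_closure ⟨.ofOdoVal k G, fun x => by simp [hK, hβ, hG]⟩

end Odometer

theorem stmt_14_general (m : ℕ) (hm : 2 ≤ m) (β : (ℕ → Fin m) → (ℕ → Fin m))
    (hβ : ∀ (x : ℕ → Fin m) (k : ℕ), odoVal m (β x) k = odoVal m x k + 1)
    (μ : Measure (ℕ → Fin m)) [IsProbabilityMeasure μ]
    (hμ : ∀ (k : ℕ) (c : ℕ → Fin m),
      μ {x | ∀ n < k, x n = c n} = (((m : ENNReal)) ^ k)⁻¹) :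
    ∃ φ : (LocallyConstant (ℕ → Fin m) ℤ ⧸ odoCobound m β) →+ ℝ,
      (∀ h : LocallyConstant (ℕ → Fin m) ℤ,
        φ (QuotientAddGroup.mk h) = ∫ x, (h x : ℝ) ∂μ) ∧
      Function.Injective φ ∧
      Set.range φ = {q : ℝ | ∃ (v : ℤ) (i : ℕ), q = (v : ℝ) / (m : ℝ) ^ i} := by
  have : NeZero m := ⟨by omega⟩
  refine ⟨QuotientAddGroup.lift _ (integralAddHom μ) (odoCobound_le_ker_integralAddHom μ hμ hβ),
    fun h => rfl, ?_, ?_⟩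
  · rw [injective_iff_map_eq_zero]
    rintro ⟨h⟩ h0
    exact (QuotientAddGroup.eq_zero_iff h).mpr (mem_odoCobound_of_integral_eq_zero μ hμ hβ h h0)
  · ext q
    constructor
    · rintro ⟨⟨h⟩, rfl⟩
      exact h.exists_integral_eq_intCast_div_pow μ hμ
    · rintro ⟨v, i, rfl⟩
      obtain ⟨h, hh⟩ := exists_locallyConstant_integral_eq_intCast_div_pow μ hμ v i
      exact ⟨h, hh⟩

/-- integration against the uniform Bernoulli measure induces an isomorphism
from the coinvariants `C(Σ, ℤ)/⟨h - h∘β⟩` of the odometer onto `ℤ[1/m]`. -/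
theorem stmt_14 (m : ℕ) (hm : 2 ≤ m) (β : (ℕ → Fin m) → (ℕ → Fin m))
    (hβcont : Continuous β)
    (hβ : ∀ (x : ℕ → Fin m) (k : ℕ), odoVal m (β x) k = odoVal m x k + 1)
    (μ : Measure (ℕ → Fin m)) [IsProbabilityMeasure μ]
    (hμ : ∀ (k : ℕ) (c : ℕ → Fin m),
      μ {x | ∀ n < k, x n = c n} = (((m : ENNReal)) ^ k)⁻¹) :
    ∃ φ : (LocallyConstant (ℕ → Fin m) ℤ ⧸ odoCobound m β) →+ ℝ,
      (∀ h : LocallyConstant (ℕ → Fin m) ℤ,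
        φ (QuotientAddGroup.mk h) = ∫ x, (h x : ℝ) ∂μ) ∧
      Function.Injective φ ∧
      Set.range φ = {q : ℝ | ∃ (v : ℤ) (i : ℕ), q = (v : ℝ) / (m : ℝ) ^ i} :=
  stmt_14_general m hm β hβ μ hμ
end
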